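/- Let K be a field of characteristic 0 and α ∈ K. For the formal Laurent series R_{α,1}(z) = Σ_{k≥0} ((B_{k+1}(α) − B_{k+1})/(k+1)) · (−1)^{k+1}/z^{k+1}, where B_j(x) are Bernoulli polynomials, the forward difference satisfies R_{α,1}(z+1) − R_{α,1}(z) = α/(z(z+α)) as formal Laurent series in 1/z. -/

import Mathlib

/-!
In `X = 1/z` the shift `z ↦ z + 1` is `X ↦ X/(1 + X)`, so the coefficient of `X^(M+1)` in
`R(z+1) - R(z)` is `(-1)^(M+1) Σ_{k<M} C(M,k) (B_{k+1}(α) - B_{k+1})/(k+1)`.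
Since `C(M,k)/(k+1) = C(M+1,k+1)/(M+1)`, the identity `Σ_{j≤M} C(M+1,j) B_j(x) = (M+1) x^M`
evaluated at `x = α` and `x = 0` turns this into `(-1)^(M+1) (α^M - 0^M)`, which is the
coefficient of `X^(M+1)` in `1/z - 1/(z+α)`.
-/

open Finset

/-- The Laurent series
`R_{α,1}(z) = Σ_{k≥0} ((B_{k+1}(α) - B_{k+1})/(k+1)) (-1)^{k+1}/z^{k+1}`, modeled as a
power series in `X = 1/z` (the coefficient of `X^m`, `m = k+1 ≥ 1`, is
`(-1)^m (B_m(α) - B_m)/m`), where `B_m(x)` is the Bernoulli polynomial. -/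
noncomputable def Ralpha {K : Type*} [Field K] [CharZero K] (α : K) : PowerSeries K :=
  PowerSeries.mk fun m =>
    if 1 ≤ m then
      (-1 : K) ^ m *
        ((Polynomial.aeval α (Polynomial.bernoulli m) - algebraMap ℚ K (bernoulli m)) / m)
    else 0

/-- The substitution `z ↦ z + 1` on formal Laurent series in `1/z` supported in
`K[[1/z]]`, i.e. `X = 1/z ↦ X(1+X)^{-1}`. -/
noncomputable def shiftOne {K : Type*} [Field K] (f : PowerSeries K) : PowerSeries K :=
  PowerSeries.mk fun m =>
    ∑ n ∈ range (m + 1),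
      (PowerSeries.coeff (R := K) n f) * (-1 : K) ^ (m - n) * ((m - 1).choose (m - n) : K)

theorem Polynomial.sum_choose_mul_aeval_bernoulli {K : Type*} [CommRing K] [Algebra ℚ K]
    (x : K) (M : ℕ) :
    ∑ j ∈ range (M + 1), ((M + 1).choose j : K) * aeval x (bernoulli j) = (M + 1) * x ^ M := by
  have h := congrArg (aeval x) (sum_bernoulli M)
  simp only [map_sum, aeval_monomial, Algebra.smul_def, map_mul, map_natCast, map_add,
    map_one] at h
  linear_combination h

theorem Polynomial.sum_choose_mul_aeval_bernoulli_succ_div {K : Type*} [Field K] [CharZero K]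
    (x : K) (M : ℕ) :
    ∑ k ∈ range M, (M.choose k : K) * (aeval x (bernoulli (k + 1)) / (k + 1))
      = x ^ M - 1 / (M + 1) := by
  have hM : (M + 1 : K) ≠ 0 := Nat.cast_add_one_ne_zero M
  have hterm : ∀ k ∈ range M, (M.choose k : K) * (aeval x (bernoulli (k + 1)) / (k + 1))
      = ((M + 1).choose (k + 1) : K) * aeval x (bernoulli (k + 1)) / (M + 1) := by
    intro k _
    have hk : (k + 1 : K) ≠ 0 := Nat.cast_add_one_ne_zero k
    have hchoose : ((M : K) + 1) * M.choose k = (M + 1).choose (k + 1) * ((k : K) + 1) := by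
      exact_mod_cast Nat.add_one_mul_choose_eq M k
    field_simp
    linear_combination aeval x (bernoulli (k + 1)) * hchoose
  have hsum := sum_choose_mul_aeval_bernoulli x M
  rw [sum_range_succ'] at hsum
  rw [sum_congr rfl hterm, ← sum_div]
  field_simp
  simpa [eq_sub_iff_add_eq] using hsum

theorem Polynomial.sum_choose_mul_aeval_bernoulli_succ_sub_bernoulli_div {K : Type*} [Field K]
    [CharZero K] (α : K) (M : ℕ) :
    ∑ k ∈ range M, (M.choose k : K) *
      ((aeval α (bernoulli (k + 1)) - algebraMap ℚ K (_root_.bernoulli (k + 1))) / (k + 1))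
      = α ^ M - 0 ^ M := by
  have h0 := sum_choose_mul_aeval_bernoulli_succ_div (0 : K) M
  simp only [← map_zero (algebraMap ℚ K), aeval_algebraMap_apply_eq_algebraMap_eval,
    bernoulli_eval_zero] at h0
  simp only [sub_div, mul_sub, sum_sub_distrib, sum_choose_mul_aeval_bernoulli_succ_div, h0]
  simp

theorem coeff_succ_shiftOne {K : Type*} [Field K] (f : PowerSeries K) (M : ℕ) :
    PowerSeries.coeff (M + 1) (shiftOne f)
      = ∑ k ∈ range (M + 1),
          PowerSeries.coeff (k + 1) f * (-1) ^ (M - k) * (M.choose k : K) := by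
  rw [shiftOne, PowerSeries.coeff_mk, sum_range_succ']
  simp only [Nat.add_sub_cancel, Nat.add_sub_add_right, Nat.sub_zero, Nat.choose_succ_self,
    Nat.cast_zero, mul_zero, add_zero]
  refine sum_congr rfl fun k hk => ?_
  rw [Nat.choose_symm (by simpa [Nat.lt_succ_iff] using hk)]

theorem coeff_succ_shiftOne_sub_coeff_succ {K : Type*} [Field K] (f : PowerSeries K) (M : ℕ) :
    PowerSeries.coeff (M + 1) (shiftOne f) - PowerSeries.coeff (M + 1) f
      = ∑ k ∈ range M, PowerSeries.coeff (k + 1) f * (-1) ^ (M - k) * (M.choose k : K) := by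
  simp [coeff_succ_shiftOne, sum_range_succ]

open Polynomial in
theorem coeff_succ_Ralpha {K : Type*} [Field K] [CharZero K] (α : K) (k : ℕ) :
    PowerSeries.coeff (k + 1) (Ralpha α) = (-1) ^ (k + 1) *
      ((aeval α (bernoulli (k + 1)) - algebraMap ℚ K (_root_.bernoulli (k + 1))) / (k + 1)) := by
  simp [Ralpha]

/-- `R_{α,1}(z+1) - R_{α,1}(z) = α/(z(z+α)) = 1/z - 1/(z+α)` as formal Laurent series
in `1/z`, where `1/(z+α) = Σ_{n≥0} (-α)^n / z^{n+1}`. -/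
theorem bdiff_Ralpha {K : Type*} [Field K] [CharZero K] (α : K) :
    shiftOne (Ralpha α) - Ralpha α =
      PowerSeries.X - PowerSeries.mk (fun m => if 1 ≤ m then (-α) ^ (m - 1) else 0) := by
  ext (_ | M)
  · simp [shiftOne, Ralpha]
  · have hsign : ∀ k ∈ range M,
        PowerSeries.coeff (k + 1) (Ralpha α) * (-1) ^ (M - k) * (M.choose k : K)
          = (-1) ^ (M + 1) * ((M.choose k : K) *
            ((Polynomial.aeval α (Polynomial.bernoulli (k + 1))
              - algebraMap ℚ K (bernoulli (k + 1))) / (k + 1))) := by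
      intro k hk
      rw [coeff_succ_Ralpha, show M + 1 = (k + 1) + (M - k) by grind, pow_add]
      ring
    rw [map_sub, coeff_succ_shiftOne_sub_coeff_succ, sum_congr rfl hsign, ← mul_sum,
      Polynomial.sum_choose_mul_aeval_bernoulli_succ_sub_bernoulli_div]
    rcases M with _ | M
    · simp [PowerSeries.coeff_X]
    · simp [PowerSeries.coeff_X, neg_pow α]
      ring
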